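/- If T is a strong Frobenius monad on a monoidal dagger category C, then the object T(I), equipped with multiplication μ_I ∘ T(ρ_{T(I)}) ∘ st_{T(I),I} : T(I) ⊗ T(I) → T(I) and unit η_I : I → T(I), is a Frobenius monoid in C; that is, the functor T ↦ T(I) preserves the Frobenius law. -/

import Mathlib

open CategoryTheory Category MonoidalCategory

universe v u

/-- A dagger structure on a category: a contravariant, identity-on-objects,
involutive operation on morphisms. -/
class DaggerStruct (C : Type u) [Category.{v} C] where
  dag : ∀ {X Y : C}, (X ⟶ Y) → (Y ⟶ X)
  dag_dag : ∀ {X Y : C} (f : X ⟶ Y), dag (dag f) = f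
  dag_id : ∀ X : C, dag (𝟙 X) = 𝟙 X
  dag_comp : ∀ {X Y Z : C} (f : X ⟶ Y) (g : Y ⟶ Z), dag (f ≫ g) = dag g ≫ dag f

notation:max f "†" => DaggerStruct.dag f

/-- A monoidal dagger category: the dagger cooperates with the monoidal structure. -/
class MonoidalDagger (C : Type u) [Category.{v} C] [MonoidalCategory C] extends
    DaggerStruct C where
  dag_tensor : ∀ {X₁ Y₁ X₂ Y₂ : C} (f : X₁ ⟶ Y₁) (g : X₂ ⟶ Y₂), (f ⊗ₘ g)† = f† ⊗ₘ g†
  assoc_unitary : ∀ X Y Z : C, ((α_ X Y Z).hom)† = (α_ X Y Z).inv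
  lunitor_unitary : ∀ X : C, ((λ_ X).hom)† = (λ_ X).inv
  runitor_unitary : ∀ X : C, ((ρ_ X).hom)† = (ρ_ X).inv

/-- A symmetric monoidal dagger category: additionally the symmetries are unitary. -/
class SymmetricDagger (C : Type u) [Category.{v} C] [MonoidalCategory C]
    [SymmetricCategory C] extends MonoidalDagger C where
  braiding_unitary : ∀ X Y : C, ((β_ X Y).hom)† = (β_ X Y).inv

/-- A monoid object, given by explicit data. -/
structure IsMonoidObj {C : Type u} [Category.{v} C] [MonoidalCategory C] (A : C)
    (m : A ⊗ A ⟶ A) (u : 𝟙_ C ⟶ A) : Prop where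
  mul_assoc : (m ⊗ₘ 𝟙 A) ≫ m = (α_ A A A).hom ≫ (𝟙 A ⊗ₘ m) ≫ m
  one_mul : (u ⊗ₘ 𝟙 A) ≫ m = (λ_ A).hom
  mul_one : (𝟙 A ⊗ₘ u) ≫ m = (ρ_ A).hom

/-- A Frobenius monoid in a monoidal dagger category. -/
structure IsFrobeniusMonoid {C : Type u} [Category.{v} C] [MonoidalCategory C]
    [MonoidalDagger C] (A : C) (m : A ⊗ A ⟶ A) (u : 𝟙_ C ⟶ A) extends
    IsMonoidObj A m u : Prop where
  frobenius : (m† ⊗ₘ 𝟙 A) ≫ (α_ A A A).hom ≫ (𝟙 A ⊗ₘ m) =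
    (𝟙 A ⊗ₘ m†) ≫ (α_ A A A).inv ≫ (m ⊗ₘ 𝟙 A)

/-- A Frobenius monad on a dagger category. -/
structure IsFrobeniusMonad {C : Type u} [Category.{v} C] [DaggerStruct C]
    (T : Monad C) : Prop where
  map_dag : ∀ {X Y : C} (f : X ⟶ Y), T.map (f†) = (T.map f)†
  frobenius : ∀ A : C,
    ((T.μ.app (T.obj A))†) ≫ T.map (T.μ.app A) =
      T.map ((T.μ.app A)†) ≫ T.μ.app (T.obj A)

/-- A strong Frobenius monad on a monoidal dagger category: a Frobenius monad `T` that is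
simultaneously a strong monad, with every strength map `st_{X,Y}` unitary. -/
structure IsStrongFrobeniusMonad {C : Type u} [Category.{v} C] [MonoidalCategory C]
    [MonoidalDagger C] (T : Monad C)
    (st : ∀ X Y : C, X ⊗ T.obj Y ⟶ T.obj (X ⊗ Y)) : Prop where
  map_dag : ∀ {X Y : C} (f : X ⟶ Y), T.map (f†) = (T.map f)†
  frobenius : ∀ A : C,
    ((T.μ.app (T.obj A))†) ≫ T.map (T.μ.app A) =
      T.map ((T.μ.app A)†) ≫ T.μ.app (T.obj A)
  st_natural : ∀ {X X' Y Y' : C} (f : X ⟶ X') (g : Y ⟶ Y'),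
    (f ⊗ₘ T.map g) ≫ st X' Y' = st X Y ≫ T.map (f ⊗ₘ g)
  st_assoc : ∀ X Y Z : C,
    (α_ X Y (T.obj Z)).inv ≫ st (X ⊗ Y) Z =
      (𝟙 X ⊗ₘ st Y Z) ≫ st X (Y ⊗ Z) ≫ T.map (α_ X Y Z).inv
  st_lunit : ∀ A : C, st (𝟙_ C) A ≫ T.map (λ_ A).hom = (λ_ (T.obj A)).hom
  st_mu : ∀ X A : C,
    (𝟙 X ⊗ₘ T.μ.app A) ≫ st X A =
      st X (T.obj A) ≫ T.map (st X A) ≫ T.μ.app (X ⊗ A)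
  st_eta : ∀ X A : C, (𝟙 X ⊗ₘ T.η.app A) ≫ st X A = T.η.app (X ⊗ A)
  st_unitary₁ : ∀ X Y : C, st X Y ≫ ((st X Y)†) = 𝟙 (X ⊗ T.obj Y)
  st_unitary₂ : ∀ X Y : C, ((st X Y)†) ≫ st X Y = 𝟙 (T.obj (X ⊗ Y))

/-- The multiplication `μ_I ∘ T(ρ_{T(I)}) ∘ st_{T(I),I}` on `T(I)` for a strong monad. -/
def tMul {C : Type u} [Category.{v} C] [MonoidalCategory C] (T : Monad C)
    (st : ∀ X Y : C, X ⊗ T.obj Y ⟶ T.obj (X ⊗ Y)) :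
    T.obj (𝟙_ C) ⊗ T.obj (𝟙_ C) ⟶ T.obj (𝟙_ C) :=
  st (T.obj (𝟙_ C)) (𝟙_ C) ≫ T.map (ρ_ (T.obj (𝟙_ C))).hom ≫ T.μ.app (𝟙_ C)

/-! Write `M = T(I)`. The multiplication factors as `φ ≫ μ_I` through the unitary
`φ = T(ρ) ∘ st : M ⊗ M ⟶ T M` (`tMulLift`), and the two bracketings of a triple product become
`ψ ≫ T(μ_I) ≫ φ†` and `ψ ≫ μ_{T I} ≫ φ†` for a single unitary
`ψ : (M ⊗ M) ⊗ M ⟶ T³ I` (`tMulLift₃`).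
Associativity is then the associativity of `μ`, and the Frobenius law of `M` reduces,
after cancelling `ψ† ≫ ψ`, to the Frobenius law `μ_{T I}† ≫ T(μ_I) = T(μ_I)† ≫ μ_{T I}`
of the monad. -/

section Dagger

variable {C : Type u} [Category.{v} C]

theorem eq_comp_dag_of_comp_eq [DaggerStruct C] {X Y Z : C} {φ : X ⟶ Y} {h : Z ⟶ X}
    {k : Z ⟶ Y} (hφ : φ ≫ φ† = 𝟙 X) (hk : h ≫ φ = k) : h = k ≫ φ† := by
  rw [← hk, assoc, hφ, comp_id]

variable [MonoidalCategory C] [MonoidalDagger C]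

theorem frobenius_of_factorization {A X Y : C} (m : A ⊗ A ⟶ A) (φ : A ⊗ A ⟶ X)
    (ψ : (A ⊗ A) ⊗ A ⟶ Y) (f g : Y ⟶ X) (hφ : φ ≫ φ† = 𝟙 (A ⊗ A)) (hψ : ψ† ≫ ψ = 𝟙 Y)
    (hf : (m ⊗ₘ 𝟙 A) ≫ φ = ψ ≫ f) (hg : (α_ A A A).hom ≫ (𝟙 A ⊗ₘ m) ≫ φ = ψ ≫ g)
    (hfg : f† ≫ g = g† ≫ f) :
    (m† ⊗ₘ 𝟙 A) ≫ (α_ A A A).hom ≫ (𝟙 A ⊗ₘ m) =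
      (𝟙 A ⊗ₘ m†) ≫ (α_ A A A).inv ≫ (m ⊗ₘ 𝟙 A) := by
  replace hf := eq_comp_dag_of_comp_eq hφ hf
  replace hg := eq_comp_dag_of_comp_eq hφ ((assoc _ _ _).trans hg)
  simp only [assoc] at hf hg
  have hf' : m† ⊗ₘ 𝟙 A = φ ≫ f† ≫ ψ† := by
    rw [← DaggerStruct.dag_id, ← MonoidalDagger.dag_tensor, hf]
    simp only [DaggerStruct.dag_comp, DaggerStruct.dag_dag, assoc]
  have hg' : (𝟙 A ⊗ₘ m†) ≫ (α_ A A A).inv = φ ≫ g† ≫ ψ† := by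
    rw [← DaggerStruct.dag_id, ← MonoidalDagger.dag_tensor, ← MonoidalDagger.assoc_unitary,
      ← DaggerStruct.dag_comp, hg]
    simp only [DaggerStruct.dag_comp, DaggerStruct.dag_dag, assoc]
  calc (m† ⊗ₘ 𝟙 A) ≫ (α_ A A A).hom ≫ (𝟙 A ⊗ₘ m)
      = φ ≫ f† ≫ (ψ† ≫ ψ) ≫ g ≫ φ† := by rw [hf', hg]; simp only [assoc]
    _ = φ ≫ (f† ≫ g) ≫ φ† := by rw [hψ, id_comp, assoc]
    _ = φ ≫ g† ≫ (ψ† ≫ ψ) ≫ f ≫ φ† := by rw [hfg, hψ, id_comp, assoc]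
    _ = (𝟙 A ⊗ₘ m†) ≫ (α_ A A A).inv ≫ (m ⊗ₘ 𝟙 A) := by
      rw [reassoc_of% hg', hf]; simp only [assoc]

end Dagger

section StrongMonad

variable {C : Type u} [Category.{v} C] [MonoidalCategory C]

def tMulLift (T : Monad C) (st : ∀ X Y : C, X ⊗ T.obj Y ⟶ T.obj (X ⊗ Y)) :
    T.obj (𝟙_ C) ⊗ T.obj (𝟙_ C) ⟶ T.obj (T.obj (𝟙_ C)) :=
  st (T.obj (𝟙_ C)) (𝟙_ C) ≫ T.map (ρ_ (T.obj (𝟙_ C))).hom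

def tMulLift₃ (T : Monad C) (st : ∀ X Y : C, X ⊗ T.obj Y ⟶ T.obj (X ⊗ Y)) :
    (T.obj (𝟙_ C) ⊗ T.obj (𝟙_ C)) ⊗ T.obj (𝟙_ C) ⟶ T.obj (T.obj (T.obj (𝟙_ C))) :=
  st (T.obj (𝟙_ C) ⊗ T.obj (𝟙_ C)) (𝟙_ C) ≫
    T.map (ρ_ (T.obj (𝟙_ C) ⊗ T.obj (𝟙_ C))).hom ≫ T.map (tMulLift T st)

theorem tMul_eq_tMulLift_comp (T : Monad C) (st : ∀ X Y : C, X ⊗ T.obj Y ⟶ T.obj (X ⊗ Y)) :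
    tMul T st = tMulLift T st ≫ T.μ.app (𝟙_ C) := by
  rw [tMul, tMulLift, assoc]

variable [MonoidalDagger C] {T : Monad C} {st : ∀ X Y : C, X ⊗ T.obj Y ⟶ T.obj (X ⊗ Y)}

namespace IsStrongFrobeniusMonad

theorem tMulLift_comp_dag (hT : IsStrongFrobeniusMonad T st) :
    tMulLift T st ≫ (tMulLift T st)† = 𝟙 _ := by
  rw [tMulLift, DaggerStruct.dag_comp, ← hT.map_dag, MonoidalDagger.runitor_unitary, assoc,
    ← T.map_comp_assoc, Iso.hom_inv_id, T.map_id, id_comp, hT.st_unitary₁]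

theorem dag_comp_tMulLift (hT : IsStrongFrobeniusMonad T st) :
    (tMulLift T st)† ≫ tMulLift T st = 𝟙 _ := by
  rw [tMulLift, DaggerStruct.dag_comp, ← hT.map_dag, MonoidalDagger.runitor_unitary, assoc,
    reassoc_of% hT.st_unitary₂, ← T.map_comp, Iso.inv_hom_id, T.map_id]

theorem dag_comp_tMulLift₃ (hT : IsStrongFrobeniusMonad T st) :
    (tMulLift₃ T st)† ≫ tMulLift₃ T st = 𝟙 _ := by
  simp only [tMulLift₃, DaggerStruct.dag_comp, ← hT.map_dag, MonoidalDagger.runitor_unitary,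
    assoc, reassoc_of% hT.st_unitary₂]
  rw [← T.map_comp_assoc, ← T.map_comp, ← T.map_comp, assoc, Iso.inv_hom_id_assoc,
    hT.dag_comp_tMulLift, T.map_id]

theorem assoc_hom_comp_st (hT : IsStrongFrobeniusMonad T st)
    (X Y Z : C) :
    (α_ X Y (T.obj Z)).hom ≫ (𝟙 X ⊗ₘ st Y Z) ≫ st X (Y ⊗ Z) =
      st (X ⊗ Y) Z ≫ T.map (α_ X Y Z).hom := by
  rw [← cancel_mono (T.map (α_ X Y Z).inv), assoc, assoc, ← hT.st_assoc, Iso.hom_inv_id_assoc,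
    assoc, ← T.map_comp, Iso.hom_inv_id, T.map_id, comp_id]

theorem tMul_tensor_id_comp_tMulLift (hT : IsStrongFrobeniusMonad T st) :
    (tMul T st ⊗ₘ 𝟙 (T.obj (𝟙_ C))) ≫ tMulLift T st =
      tMulLift₃ T st ≫ T.map (T.μ.app (𝟙_ C)) := by
  have h := hT.st_natural (tMul T st) (𝟙 (𝟙_ C))
  rw [T.map_id] at h
  rw [tMulLift, ← assoc, h, assoc, ← T.map_comp, tensorHom_id,
    rightUnitor_naturality, T.map_comp, tMul_eq_tMulLift_comp, T.map_comp, tMulLift₃]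
  simp only [assoc]

theorem assoc_tMul_comp_tMulLift (hT : IsStrongFrobeniusMonad T st) :
    (α_ (T.obj (𝟙_ C)) (T.obj (𝟙_ C)) (T.obj (𝟙_ C))).hom ≫
        (𝟙 (T.obj (𝟙_ C)) ⊗ₘ tMul T st) ≫ tMulLift T st =
      tMulLift₃ T st ≫ T.μ.app (T.obj (𝟙_ C)) := by
  set M := T.obj (𝟙_ C)
  have μ_natural : T.μ.app (M ⊗ 𝟙_ C) ≫ T.map (ρ_ M).hom =
      T.map (T.map (ρ_ M).hom) ≫ T.μ.app M := (T.μ.naturality (ρ_ M).hom).symm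
  have unitor_coherence : T.map (α_ M M (𝟙_ C)).hom ≫ T.map (𝟙 M ⊗ₘ (ρ_ M).hom) =
      T.map (ρ_ (M ⊗ M)).hom := by
    rw [← T.map_comp, id_tensorHom, ← rightUnitor_tensor_hom]
  rw [tMul, tMulLift₃, tMulLift]
  simp only [id_tensor_comp, assoc]
  rw [reassoc_of% hT.st_mu, reassoc_of% hT.st_natural (𝟙 M) (ρ_ M).hom, μ_natural,
    reassoc_of% hT.assoc_hom_comp_st, reassoc_of% unitor_coherence, T.map_comp, assoc]

theorem eta_tensor_id_comp_tMul (hT : IsStrongFrobeniusMonad T st) :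
    (T.η.app (𝟙_ C) ⊗ₘ 𝟙 (T.obj (𝟙_ C))) ≫ tMul T st = (λ_ (T.obj (𝟙_ C))).hom := by
  have h := hT.st_natural (T.η.app (𝟙_ C)) (𝟙 (𝟙_ C))
  rw [T.map_id] at h
  rw [tMul, ← assoc, h, assoc, ← T.map_comp_assoc, tensorHom_id, rightUnitor_naturality,
    T.map_comp, assoc, T.right_unit, comp_id]
  dsimp only [Functor.id_obj]
  rw [← unitors_equal]
  exact hT.st_lunit (𝟙_ C)

theorem id_tensor_eta_comp_tMul (hT : IsStrongFrobeniusMonad T st) :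
    (𝟙 (T.obj (𝟙_ C)) ⊗ₘ T.η.app (𝟙_ C)) ≫ tMul T st = (ρ_ (T.obj (𝟙_ C))).hom := by
  rw [tMul, ← assoc, hT.st_eta, ← assoc, ← T.η.naturality (ρ_ (T.obj (𝟙_ C))).hom, assoc,
    Functor.id_map, T.left_unit, comp_id]

end IsStrongFrobeniusMonad

end StrongMonad

/-- STATEMENT 17: if `T` is a strong Frobenius monad on a monoidal dagger category `C`,
then `T(I)`, with multiplication `μ_I ∘ T(ρ) ∘ st` and unit `η_I`, is a Frobenius monoid:
the functor `T ↦ T(I)` preserves the Frobenius law. -/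
theorem eval_unit_frobenius_monoid {C : Type u} [Category.{v} C] [MonoidalCategory C]
    [MonoidalDagger C] (T : Monad C) (st : ∀ X Y : C, X ⊗ T.obj Y ⟶ T.obj (X ⊗ Y))
    (hT : IsStrongFrobeniusMonad T st) :
    IsFrobeniusMonoid (T.obj (𝟙_ C)) (tMul T st) (T.η.app (𝟙_ C)) := by
  refine ⟨⟨?_, hT.eta_tensor_id_comp_tMul, hT.id_tensor_eta_comp_tMul⟩, ?_⟩
  · calc (tMul T st ⊗ₘ 𝟙 _) ≫ tMul T st
        = tMulLift₃ T st ≫ T.map (T.μ.app _) ≫ T.μ.app _ := by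
          rw [← reassoc_of% hT.tMul_tensor_id_comp_tMulLift, ← tMul_eq_tMulLift_comp]
      _ = tMulLift₃ T st ≫ T.μ.app _ ≫ T.μ.app _ := by rw [T.assoc]
      _ = (α_ _ _ _).hom ≫ (𝟙 _ ⊗ₘ tMul T st) ≫ tMul T st := by
          rw [← reassoc_of% hT.assoc_tMul_comp_tMulLift, ← tMul_eq_tMulLift_comp]
  · exact frobenius_of_factorization _ (tMulLift T st) (tMulLift₃ T st)
      (T.map (T.μ.app _)) (T.μ.app _) hT.tMulLift_comp_dag hT.dag_comp_tMulLift₃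
      hT.tMul_tensor_id_comp_tMulLift hT.assoc_tMul_comp_tMulLift
      (by rw [← hT.map_dag]; exact (hT.frobenius _).symm)
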